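/- Let α, δ ∈ ℝ and define Ψ_{α,δ} : [0,∞) × ℝ → ℝ by Ψ_{α,δ}(t,x) = −(x − α − t/2 − t²)²/(1 + 4t) − δ + αt + t²/4 + t³/3. Then Ψ_{α,δ}(0,x) = −(x − α)² − δ for all x ∈ ℝ, and for every t > 0 and x ∈ ℝ, Ψ_{α,δ} is differentiable with ∂t Ψ_{α,δ}(t,x) = x + (∂x Ψ_{α,δ}(t,x))². -/

import Mathlib

/-!
With `c(t) = α + t/2 + t²` and `u = x - c(t)` we have
`Ψ = -u²/(1+4t) - δ + αt + t²/4 + t³/3`, so `∂ₓΨ = -2u/(1+4t)`. Since `c'(t) = (1+4t)/2`,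
differentiating `-u²/(1+4t)` in `t` gives `u + 4u²/(1+4t)² = u + (∂ₓΨ)²`, and the remaining
terms contribute `α + t/2 + t² = c(t)`; hence `∂ₜΨ = u + c + (∂ₓΨ)² = x + (∂ₓΨ)²`.
-/

/-- The translated explicit moving quadratic profile of Section 6.1 of the paper. -/
noncomputable def PsiAD (α δ t x : ℝ) : ℝ :=
  -(x - α - t / 2 - t ^ 2) ^ 2 / (1 + 4 * t) - δ + α * t + t ^ 2 / 4 + t ^ 3 / 3

lemma PsiAD_zero (α δ x : ℝ) : PsiAD α δ 0 x = -(x - α) ^ 2 - δ := by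
  unfold PsiAD; ring

lemma hasDerivAt_PsiAD_space (α δ t x : ℝ) :
    HasDerivAt (fun y => PsiAD α δ t y) (-2 * (x - α - t / 2 - t ^ 2) / (1 + 4 * t)) x := by
  have hu : HasDerivAt (fun y : ℝ => y - α - t / 2 - t ^ 2) 1 x :=
    (((hasDerivAt_id x).sub_const α).sub_const (t / 2)).sub_const (t ^ 2)
  refine (((((hu.fun_pow 2).fun_neg.div_const (1 + 4 * t)).sub_const δ).add_const
    (α * t)).add_const (t ^ 2 / 4)).add_const (t ^ 3 / 3) |>.congr_deriv ?_
  norm_num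

lemma hasDerivAt_PsiAD_time (α δ t x : ℝ) (ht : 1 + 4 * t ≠ 0) :
    HasDerivAt (fun s => PsiAD α δ s x)
      (x + (2 * (x - α - t / 2 - t ^ 2) / (1 + 4 * t)) ^ 2) t := by
  have hu : HasDerivAt (fun s : ℝ => x - α - s / 2 - s ^ 2) (-(1 + 4 * t) / 2) t := by
    refine (((hasDerivAt_id t).div_const 2).const_sub (x - α)).fun_sub (hasDerivAt_pow 2 t)
      |>.congr_deriv ?_
    norm_num; ring
  have hden : HasDerivAt (fun s : ℝ => 1 + 4 * s) 4 t := by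
    simpa using ((hasDerivAt_id t).const_mul 4).const_add 1
  refine ((((hu.fun_pow 2).fun_neg.fun_div hden ht).sub_const δ).fun_add
    ((hasDerivAt_id t).const_mul α)).fun_add ((hasDerivAt_pow 2 t).div_const 4) |>.fun_add
    ((hasDerivAt_pow 3 t).div_const 3) |>.congr_deriv ?_
  norm_num only
  -- `field_simp` would normalize `1 + 4 * t` to `1 + t * 4` and no longer match `ht`.
  set D := 1 + 4 * t with hD
  field_simp
  rw [hD]
  ring

/-- translated explicit solution in the analytical counterexample of
Section 6.1 of the paper: `Ψ_{α,δ}(t,x) = −(x − α − t/2 − t²)²/(1+4t) − δ + αt + t²/4 + t³/3`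
satisfies `Ψ_{α,δ}(0,x) = −(x − α)² − δ` and solves `∂t Ψ = x + (∂x Ψ)²` for `t > 0`. -/
theorem explicit_translated_solution_psi (α δ : ℝ) :
    (∀ x : ℝ, PsiAD α δ 0 x = -(x - α) ^ 2 - δ) ∧
    ∀ t > (0 : ℝ), ∀ x : ℝ,
      DifferentiableAt ℝ (fun s => PsiAD α δ s x) t ∧
      DifferentiableAt ℝ (fun y => PsiAD α δ t y) x ∧
      deriv (fun s => PsiAD α δ s x) t = x + (deriv (fun y => PsiAD α δ t y) x) ^ 2 := by
  refine ⟨PsiAD_zero α δ, fun t ht x => ?_⟩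
  have htime := hasDerivAt_PsiAD_time α δ t x (by positivity)
  have hspace := hasDerivAt_PsiAD_space α δ t x
  refine ⟨htime.differentiableAt, hspace.differentiableAt, ?_⟩
  rw [htime.deriv, hspace.deriv]
  ring
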